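/- Let R be an integral domain and I a proper t-ideal of R. Then I⁻¹ is a subring of the quotient field K if and only if I is not t-invertible and (M:I) is a subring of K for each t-maximal ideal M of R containing I. -/

import Mathlib

/-!
Common definitions: star operations (`v`- and `t`-closure), `t`-ideals, `t`-invertibility,
PVMDs, overrings, `t`-linked and `t`-flat overrings, localizations inside the quotient
field, Nagata and Kaplansky transforms, endomorphism rings of ideals.
-/

open scoped Classical

namespace PVMDPaper

noncomputable section

section Generic

variable (A : Type*) [CommRing A] (K : Type*) [Field K] [Algebra A K]

/-- The image of an integral ideal of `A` inside the field `K`, as an `A`-submodule of `K`. -/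
def toK (I : Ideal A) : Submodule A K := Submodule.map (Algebra.linearMap A K) I

variable {A K}

/-- The dual `I⁻¹ = (A : I) = {x ∈ K : x I ⊆ A}` of a submodule of `K`. -/
def dual (I : Submodule A K) : Submodule A K := 1 / I

/-- The `v`-closure `I_v = (I⁻¹)⁻¹`. -/
def vOp (I : Submodule A K) : Submodule A K := 1 / (1 / I)

/-- The `t`-closure `I_t`: the union of `J_v` where `J` ranges over the nonzero finitely
generated submodules `J ≤ I` (the union of this directed family is its supremum). -/
def tOp (I : Submodule A K) : Submodule A K :=
  sSup {V | ∃ J : Submodule A K, J ≠ ⊥ ∧ J.FG ∧ J ≤ I ∧ V = vOp J}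

variable (K)

/-- An (integral) ideal `I` of `A` is a `t`-ideal if `I = I_t`. -/
def IsTIdeal (I : Ideal A) : Prop := tOp (toK A K I) = toK A K I

/-- An ideal `I` is `t`-invertible if `(I I⁻¹)_t = A`. -/
def IsTInvertible (I : Ideal A) : Prop := tOp (toK A K I * dual (toK A K I)) = 1

/-- A `t`-maximal ideal: an ideal maximal in the set of proper integral `t`-ideals. -/
def IsTMaximal (M : Ideal A) : Prop :=
  M ≠ ⊤ ∧ IsTIdeal K M ∧ ∀ J : Ideal A, J ≠ ⊤ → IsTIdeal K J → M ≤ J → J = M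

variable (A)

/-- `A` is a Prüfer `v`-multiplication domain: every nonzero finitely generated ideal
is `t`-invertible. -/
def IsPVMD : Prop := ∀ I : Ideal A, I ≠ ⊥ → I.FG → IsTInvertible K I

/-- `Spec_t(A)` is Noetherian: the ascending chain condition on radical `t`-ideals. -/
def TSpecNoetherian : Prop :=
  ∀ f : ℕ →o Ideal A, (∀ n, IsTIdeal K (f n) ∧ (f n).radical = f n) →
    ∃ n, ∀ m, n ≤ m → f m = f n

variable {A K}

/-- A submodule of `K` is a subring of `K` iff it contains `1` and is closed under
multiplication (being an additive subgroup already). -/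
def IsSubringOf (S : Submodule A K) : Prop :=
  (1 : K) ∈ S ∧ ∀ x ∈ S, ∀ y ∈ S, x * y ∈ S

variable (K)

/-- The localization `A_P = {a/s : a ∈ A, s ∈ A ∖ P}` viewed as a subset of `K`. -/
def loc (P : Ideal A) : Set K :=
  {x | ∃ a s : A, s ∉ P ∧ x * algebraMap A K s = algebraMap A K a}

/-- The set `J A_P = {a/s : a ∈ J, s ∈ A ∖ P} ⊆ K`. -/
def locIdealAt (J P : Ideal A) : Set K :=
  {x | ∃ a ∈ J, ∃ s : A, s ∉ P ∧ x * algebraMap A K s = algebraMap A K a}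

/-- `Z(A, I)`: the set of zero divisors on `A/I`. -/
def ZSet (I : Ideal A) : Set A := {x | ∃ a : A, a ∉ I ∧ x * a ∈ I}

/-- `Q` is a maximal prime ideal of `Z(A,I)`: a prime contained in `Z(A,I)`, maximal
(under inclusion) among the primes contained in `Z(A,I)`. -/
def MaxPrimeOfZ (I Q : Ideal A) : Prop :=
  Q.IsPrime ∧ (Q : Set A) ⊆ ZSet I ∧
    ∀ Q' : Ideal A, Q'.IsPrime → (Q' : Set A) ⊆ ZSet I → Q ≤ Q' → Q' = Q

end Generic

section Overring

variable {R : Type*} [CommRing R] [IsDomain R]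
variable {K : Type*} [Field K] [Algebra R K] [IsFractionRing R K]

/-- The extension `IT` of an ideal `I` of `R` to an overring `T`, as a `T`-submodule of `K`. -/
def extendI (I : Ideal R) (T : Subalgebra R K) : Submodule T K :=
  Submodule.span T (algebraMap R K '' (I : Set R))

/-- The extension `IT` of an `R`-submodule `I` of `K` to an overring `T`. -/
def extendS (I : Submodule R K) (T : Subalgebra R K) : Submodule T K :=
  Submodule.span T (I : Set K)

/-- An overring `T` of `R` is `t`-linked over `R` if `(IT)⁻¹ = T` for each finitely
generated ideal `I` of `R` with `I⁻¹ = R`. -/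
def IsTLinked (T : Subalgebra R K) : Prop :=
  ∀ I : Ideal R, I.FG → dual (toK R K I) = 1 → dual (extendI I T) = 1

/-- An overring `T` of `R` is `t`-flat over `R` if `T_M = R_{M ∩ R}` for each
`t`-maximal ideal `M` of `T`. -/
def IsTFlat (T : Subalgebra R K) : Prop :=
  ∀ M : Ideal T, IsTMaximal K M → loc K M = loc K (M.comap (algebraMap R T))

variable (R K)

/-- `R` is a `tQR`-domain: a PVMD all of whose `t`-linked overrings are localizations
of `R` at multiplicative sets. -/
def IsTQR : Prop :=
  IsPVMD R K ∧ ∀ T : Subalgebra R K, IsTLinked T → ∃ S : Submonoid R,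
    (T : Set K) = {x | ∃ a : R, ∃ s ∈ S, x * algebraMap R K s = algebraMap R K a}

variable {R K}
variable (K)

/-- The endomorphism ring `(I : I) = {x ∈ K : x I ⊆ I}` of an ideal `I`, as an
overring of `R`. -/
def endoRing (I : Ideal R) : Subalgebra R K where
  carrier := {x : K | ∀ y ∈ toK R K I, x * y ∈ toK R K I}
  mul_mem' := by
    intro a b ha hb y hy
    rw [mul_assoc]
    exact ha _ (hb _ hy)
  one_mem' := by
    intro y hy
    rwa [one_mul]
  add_mem' := by
    intro a b ha hb y hy
    rw [add_mul]
    exact Submodule.add_mem _ (ha y hy) (hb y hy)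
  zero_mem' := by
    intro y hy
    rw [zero_mul]
    exact Submodule.zero_mem _
  algebraMap_mem' := by
    intro r y hy
    rw [← Algebra.smul_def]
    exact Submodule.smul_mem _ r hy

set_option synthInstance.maxHeartbeats 400000 in
/-- The ideal `I`, viewed as an ideal of its endomorphism ring `(I : I)`. -/
def idealInEndo (I : Ideal R) : Ideal (endoRing K I) where
  carrier := {x | (x : K) ∈ toK R K I}
  add_mem' := by
    intro a b ha hb
    simp only [Set.mem_setOf_eq] at *
    rw [AddMemClass.coe_add]
    exact Submodule.add_mem _ ha hb
  zero_mem' := by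
    simp only [Set.mem_setOf_eq, ZeroMemClass.coe_zero]
    exact Submodule.zero_mem _
  smul_mem' := by
    intro c x hx
    simp only [Set.mem_setOf_eq] at *
    rw [smul_eq_mul, MulMemClass.coe_mul]
    exact c.2 _ hx

/-- The Kaplansky transform `Ω(I) = {u ∈ K : ∀ a ∈ I, ∃ n ≥ 1, u aⁿ ∈ R}`, as an
overring of `R`. -/
def kaplansky (I : Ideal R) : Subalgebra R K where
  carrier := {u : K | ∀ a ∈ I, ∃ n : ℕ, 0 < n ∧
    ∃ r : R, u * (algebraMap R K a) ^ n = algebraMap R K r}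
  mul_mem' := by
    intro u v hu hv a ha
    obtain ⟨n, hn, r, hr⟩ := hu a ha
    obtain ⟨m, hm, s, hs⟩ := hv a ha
    refine ⟨n + m, by omega, r * s, ?_⟩
    rw [map_mul, ← hr, ← hs, pow_add]
    ring
  one_mem' := by
    intro a ha
    exact ⟨1, one_pos, a, by rw [pow_one, one_mul]⟩
  add_mem' := by
    intro u v hu hv a ha
    obtain ⟨n, hn, r, hr⟩ := hu a ha
    obtain ⟨m, hm, s, hs⟩ := hv a ha
    refine ⟨n + m, by omega, r * a ^ m + s * a ^ n, ?_⟩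
    rw [map_add, map_mul, map_mul, map_pow, map_pow, ← hr, ← hs, pow_add, add_mul]
    ring
  zero_mem' := by
    intro a ha
    exact ⟨1, one_pos, 0, by rw [map_zero, zero_mul]⟩
  algebraMap_mem' := by
    intro r a ha
    exact ⟨1, one_pos, r * a, by rw [map_mul, pow_one]⟩

/-- The Nagata (ideal) transform `T(I) = ⋃_{n ≥ 1} (R : Iⁿ)`, as an overring of `R`. -/
def nagata (I : Ideal R) : Subalgebra R K where
  carrier := {x : K | ∃ n : ℕ, ∀ y ∈ I ^ (n + 1),
    ∃ r : R, x * algebraMap R K y = algebraMap R K r}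
  mul_mem' := by
    intro x x' hx hx'
    obtain ⟨n, hn⟩ := hx
    obtain ⟨m, hm⟩ := hx'
    refine ⟨n + m + 1, fun y hy => ?_⟩
    rw [show n + m + 1 + 1 = (n + 1) + (m + 1) by omega, pow_add] at hy
    refine Submodule.mul_induction_on hy ?_ ?_
    · intro a ha b hb
      obtain ⟨r, hr⟩ := hn a ha
      obtain ⟨s, hs⟩ := hm b hb
      refine ⟨r * s, ?_⟩
      rw [map_mul, map_mul, ← hr, ← hs]
      ring
    · rintro y1 y2 ⟨r1, h1⟩ ⟨r2, h2⟩
      exact ⟨r1 + r2, by rw [map_add, map_add, mul_add, h1, h2]⟩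
  one_mem' := ⟨0, fun y _ => ⟨y, by rw [one_mul]⟩⟩
  add_mem' := by
    intro x x' hx hx'
    obtain ⟨n, hn⟩ := hx
    obtain ⟨m, hm⟩ := hx'
    refine ⟨n + m + 1, fun y hy => ?_⟩
    have h1 : y ∈ I ^ (n + 1) := Ideal.pow_le_pow_right (by omega) hy
    have h2 : y ∈ I ^ (m + 1) := Ideal.pow_le_pow_right (by omega) hy
    obtain ⟨r, hr⟩ := hn y h1
    obtain ⟨s, hs⟩ := hm y h2
    exact ⟨r + s, by rw [map_add, add_mul, hr, hs]⟩
  zero_mem' := ⟨0, fun y _ => ⟨0, by rw [map_zero, zero_mul]⟩⟩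
  algebraMap_mem' := by
    intro r
    exact ⟨0, fun y _ => ⟨r * y, by rw [map_mul]⟩⟩

end Overring

/-!
`t`-maximal ideals are prime: if `b ∉ M` then `(M + bR)_t = R` by maximality, so `ab ∈ M`
gives `a ∈ a (M + bR)_t ⊆ (aM + abR)_t ⊆ M_t = M`.

Write `J = I⁻¹`, so `1 ∈ J` and `(M : I) ⊆ J`. If `J` is a ring and `(IJ)_t = R`, then
`J = J (IJ)_t ⊆ (J I J)_t ⊆ (IJ)_t = R`, whence `I = I_t = (IJ)_t = R`. For a prime `P ⊇ I`,
either `J ⊆ (P : I)`, or some `u ∈ J`, `a ∈ I` has `ua ∉ P`; then for `x, y ∈ (P : I)` and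
`z ∈ I` the product `(xyz)(ua) = (uxa)(yz)` lies in `P`, so `xyz ∈ P`. Conversely, if `I` is
not `t`-invertible, `(IJ)_t` lies in a `t`-maximal ideal `M` (Zorn, `t`-ideals being closed
under directed unions), and then `IJ ⊆ M` means `J = (M : I)`.
-/

section TClosure

variable {R : Type*} [CommRing R] {K : Type*} [Field K] [Algebra R K]

lemma exists_le_of_fg_le_sSup {M : Type*} [AddCommMonoid M] [Module R M]
    {N : Submodule R M} (hfg : N.FG) (hN : N ≠ ⊥) {D : Set (Submodule R M)}
    (hD : DirectedOn (· ≤ ·) D) (hle : N ≤ sSup D) : ∃ V ∈ D, N ≤ V := by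
  rcases D.eq_empty_or_nonempty with rfl | hne
  · exact absurd (le_bot_iff.mp (by simpa using hle)) hN
  · exact (CompleteLattice.isCompactElement_iff_le_of_directed_sSup_le _ N).mp
      ((Submodule.fg_iff_compact N).mp hfg) D hne hD hle

lemma one_div_le_one_div {S T : Submodule R K} (h : S ≤ T) : 1 / T ≤ 1 / S :=
  Submodule.le_div_iff_mul_le.mpr
    ((mul_le_mul_right h _).trans (Submodule.le_div_iff_mul_le.mp le_rfl))

lemma le_vOp (S : Submodule R K) : S ≤ vOp S :=
  Submodule.le_div_iff_mul_le.mpr Submodule.mul_one_div_le_one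

lemma vOp_mono {S T : Submodule R K} (h : S ≤ T) : vOp S ≤ vOp T :=
  one_div_le_one_div (one_div_le_one_div h)

lemma vOp_vOp (S : Submodule R K) : vOp (vOp S) = vOp S :=
  le_antisymm (one_div_le_one_div (le_vOp (1 / S))) (le_vOp _)

lemma vOp_le_one {S : Submodule R K} (h : S ≤ 1) : vOp S ≤ 1 := by
  refine (vOp_mono h).trans fun x hx => ?_
  simpa using hx 1 (Submodule.one_mem_div.mpr le_rfl)

lemma mul_vOp_le (S T : Submodule R K) : S * vOp T ≤ vOp (S * T) := by
  refine Submodule.mul_le.mpr fun a ha v hv u hu => ?_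
  have hua : u * a ∈ 1 / T := fun t ht => by
    simpa only [mul_assoc] using hu _ (Submodule.mul_mem_mul ha ht)
  convert hv _ hua using 1
  ring

lemma vOp_le_tOp {S J : Submodule R K} (hJ : J ≠ ⊥) (hfg : J.FG) (hle : J ≤ S) :
    vOp J ≤ tOp S :=
  le_sSup ⟨J, hJ, hfg, hle, rfl⟩

lemma le_tOp (S : Submodule R K) : S ≤ tOp S := by
  intro x hx
  by_cases hx0 : x = 0
  · rw [hx0]
    exact zero_mem _
  · exact vOp_le_tOp (by rwa [ne_eq, Submodule.span_singleton_eq_bot])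
      (Submodule.fg_span_singleton x) ((Submodule.span_singleton_le_iff_mem x S).mpr hx)
      (le_vOp _ (Submodule.mem_span_singleton_self x))

lemma tOp_mono {S T : Submodule R K} (h : S ≤ T) : tOp S ≤ tOp T := by
  apply sSup_le_sSup
  rintro _ ⟨J, hJ, hfg, hle, rfl⟩
  exact ⟨J, hJ, hfg, hle.trans h, rfl⟩

lemma tOp_le_one {S : Submodule R K} (h : S ≤ 1) : tOp S ≤ 1 :=
  sSup_le fun _ ⟨_, _, _, hle, hV⟩ => hV ▸ vOp_le_one (hle.trans h)

lemma exists_le_vOp_of_le_tOp {S J : Submodule R K} (hJ : J ≠ ⊥) (hfg : J.FG)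
    (hle : J ≤ tOp S) : ∃ J' : Submodule R K, J' ≠ ⊥ ∧ J'.FG ∧ J' ≤ S ∧ J ≤ vOp J' := by
  have hdir : DirectedOn (· ≤ ·)
      {V | ∃ J' : Submodule R K, J' ≠ ⊥ ∧ J'.FG ∧ J' ≤ S ∧ V = vOp J'} := by
    rintro _ ⟨J₁, h₁, hfg₁, hle₁, rfl⟩ _ ⟨J₂, -, hfg₂, hle₂, rfl⟩
    exact ⟨vOp (J₁ ⊔ J₂), ⟨J₁ ⊔ J₂, fun h => h₁ (eq_bot_mono le_sup_left h),
      hfg₁.sup hfg₂, sup_le hle₁ hle₂, rfl⟩, vOp_mono le_sup_left, vOp_mono le_sup_right⟩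
  obtain ⟨_, ⟨J', hJ', hfg', hle', rfl⟩, hJJ'⟩ := exists_le_of_fg_le_sSup hfg hJ hdir hle
  exact ⟨J', hJ', hfg', hle', hJJ'⟩

lemma tOp_tOp (S : Submodule R K) : tOp (tOp S) = tOp S := by
  refine le_antisymm (sSup_le ?_) (le_tOp _)
  rintro _ ⟨J, hJ, hfg, hle, rfl⟩
  obtain ⟨J', hJ', hfg', hle', hJJ'⟩ := exists_le_vOp_of_le_tOp hJ hfg hle
  calc vOp J ≤ vOp (vOp J') := vOp_mono hJJ'
    _ = vOp J' := vOp_vOp J'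
    _ ≤ tOp S := vOp_le_tOp hJ' hfg' hle'

lemma mul_tOp_le (S T : Submodule R K) : S * tOp T ≤ tOp (S * T) := by
  refine Submodule.mul_le.mpr fun a ha v hv => ?_
  rcases eq_or_ne a 0 with rfl | ha0
  · simp
  rcases eq_or_ne v 0 with rfl | hv0
  · simp
  have hspan : Submodule.span R {a} ≠ ⊥ := by rwa [ne_eq, Submodule.span_singleton_eq_bot]
  obtain ⟨J, hJ, hfg, hle, hvJ⟩ := exists_le_vOp_of_le_tOp
    (by rwa [ne_eq, Submodule.span_singleton_eq_bot]) (Submodule.fg_span_singleton v)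
    ((Submodule.span_singleton_le_iff_mem v _).mpr hv)
  refine vOp_le_tOp (by simp [hspan, hJ]) ((Submodule.fg_span_singleton a).mul hfg)
    (mul_le_mul' ((Submodule.span_singleton_le_iff_mem a S).mpr ha) hle) ?_
  exact mul_vOp_le _ _ (Submodule.mul_mem_mul (Submodule.mem_span_singleton_self a)
    (hvJ (Submodule.mem_span_singleton_self v)))

lemma tOp_sSup_of_directedOn {D : Set (Submodule R K)} (hD : DirectedOn (· ≤ ·) D)
    (ht : ∀ V ∈ D, tOp V = V) : tOp (sSup D) = sSup D := by
  refine le_antisymm (sSup_le ?_) (le_tOp _)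
  rintro _ ⟨J, hJ, hfg, hle, rfl⟩
  obtain ⟨V, hV, hJV⟩ := exists_le_of_fg_le_sSup hfg hJ hD hle
  exact (vOp_le_tOp hJ hfg hJV).trans ((ht V hV).le.trans (le_sSup hV))

lemma le_one_of_tOp_mul_eq_one {S T : Submodule R K} (hT : T * T ≤ T) (h : tOp (S * T) = 1) :
    T ≤ 1 :=
  calc T = T * tOp (S * T) := by rw [h, mul_one]
    _ ≤ tOp (T * (S * T)) := mul_tOp_le _ _
    _ ≤ tOp (S * T) := tOp_mono (by rw [mul_left_comm]; exact mul_le_mul_right hT S)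
    _ = 1 := h

lemma div_le_one_div {S : Submodule R K} (hS : S ≤ 1) (T : Submodule R K) : S / T ≤ 1 / T :=
  fun _ hx y hy => hS (hx y hy)

end TClosure

section IdealsInK

variable {R : Type*} [CommRing R] {K : Type*} [Field K] [Algebra R K]

lemma toK_mono {I J : Ideal R} (h : I ≤ J) : toK R K I ≤ toK R K J :=
  Submodule.map_mono h

lemma toK_le_one (I : Ideal R) : toK R K I ≤ 1 := by
  rintro _ ⟨a, _, rfl⟩
  exact Submodule.mem_one.mpr ⟨a, rfl⟩

lemma toK_top : toK R K (⊤ : Ideal R) = 1 := by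
  rw [toK, Submodule.map_top, ← Submodule.one_eq_range]

lemma toK_mul (I J : Ideal R) : toK R K (I * J) = toK R K I * toK R K J :=
  Submodule.map_mul I J (Algebra.ofId R K)

lemma toK_sSup (c : Set (Ideal R)) : toK R K (sSup c) = sSup (toK R K '' c) := by
  rw [sSup_image]
  exact (Submodule.gc_map_comap _).l_sSup

def ofK (S : Submodule R K) : Ideal R := S.comap (Algebra.linearMap R K)

lemma toK_ofK {S : Submodule R K} (h : S ≤ 1) : toK R K (ofK S) = S := by
  rw [toK, ofK, Submodule.map_comap_eq, ← Submodule.one_eq_range, inf_eq_right.mpr h]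

lemma le_ofK {I : Ideal R} {S : Submodule R K} : I ≤ ofK S ↔ toK R K I ≤ S :=
  Submodule.map_le_iff_le_comap.symm

variable [IsFractionRing R K]

lemma mem_toK {I : Ideal R} {a : R} : algebraMap R K a ∈ toK R K I ↔ a ∈ I :=
  ⟨fun ⟨_, hb, hba⟩ => IsFractionRing.injective R K hba ▸ hb, fun ha => ⟨a, ha, rfl⟩⟩

lemma toK_le_toK {I J : Ideal R} : toK R K I ≤ toK R K J ↔ I ≤ J :=
  Submodule.map_le_map_iff_of_injective (f := Algebra.linearMap R K)
    (IsFractionRing.injective R K) I J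

lemma toK_eq_one {I : Ideal R} : toK R K I = 1 ↔ I = ⊤ := by
  rw [← toK_top, le_antisymm_iff, toK_le_toK, toK_le_toK, ← le_antisymm_iff]

lemma ofK_eq_top {S : Submodule R K} (h : S ≤ 1) : ofK S = ⊤ ↔ S = 1 := by
  rw [← toK_eq_one (K := K), toK_ofK h]

lemma mem_toK_of_mul_mem {P : Ideal R} (hP : P.IsPrime) {w c : K} (hw : w ∈ (1 : Submodule R K))
    (hc : c ∈ (1 : Submodule R K)) (hcP : c ∉ toK R K P) (hwc : w * c ∈ toK R K P) :
    w ∈ toK R K P := by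
  obtain ⟨r, rfl⟩ := Submodule.mem_one.mp hw
  obtain ⟨s, rfl⟩ := Submodule.mem_one.mp hc
  rw [← map_mul, mem_toK] at hwc
  rw [mem_toK] at hcP ⊢
  exact (hP.mem_or_mem hwc).resolve_right hcP

end IdealsInK

section TMaximal

variable {R : Type*} [CommRing R] {K : Type*} [Field K] [Algebra R K]

lemma isTIdeal_ofK_tOp {S : Submodule R K} (h : S ≤ 1) : IsTIdeal K (ofK (tOp S)) := by
  rw [IsTIdeal, toK_ofK (tOp_le_one h), tOp_tOp]

lemma isTIdeal_sSup {c : Set (Ideal R)} (hc : IsChain (· ≤ ·) c) (ht : ∀ J ∈ c, IsTIdeal K J) :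
    IsTIdeal K (sSup c) := by
  rw [IsTIdeal, toK_sSup]
  refine tOp_sSup_of_directedOn ?_ ?_
  · rintro _ ⟨C₁, h₁, rfl⟩ _ ⟨C₂, h₂, rfl⟩
    obtain ⟨C₃, h₃, h₁₃, h₂₃⟩ := hc.directedOn C₁ h₁ C₂ h₂
    exact ⟨toK R K C₃, ⟨C₃, h₃, rfl⟩, toK_mono h₁₃, toK_mono h₂₃⟩
  · rintro _ ⟨C, hC, rfl⟩
    exact ht C hC

lemma exists_isTMaximal_le {T : Ideal R} (hT : T ≠ ⊤) (htT : IsTIdeal K T) :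
    ∃ M : Ideal R, IsTMaximal K M ∧ T ≤ M := by
  obtain ⟨M, hTM, ⟨hMtop, hMt⟩, hMmax⟩ :=
    zorn_le_nonempty₀ {J : Ideal R | J ≠ ⊤ ∧ IsTIdeal K J} (fun c hcs hc J hJ => by
      refine ⟨sSup c, ⟨fun htop => ?_, isTIdeal_sSup hc fun C hC => (hcs hC).2⟩,
        fun _ => le_sSup⟩
      have h1 : (1 : R) ∈ sSup c := htop ▸ Submodule.mem_top
      obtain ⟨C, hC, h1C⟩ := (Submodule.mem_sSup_of_directed ⟨J, hJ⟩ hc.directedOn).mp h1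
      exact (hcs hC).1 ((Ideal.eq_top_iff_one C).mpr h1C)) T ⟨hT, htT⟩
  exact ⟨M, ⟨hMtop, hMt, fun J hJ hJt hMJ => le_antisymm (hMmax ⟨hJ, hJt⟩ hMJ) hMJ⟩, hTM⟩

variable [IsFractionRing R K]

lemma IsTMaximal.tOp_sup_span_eq_one {M : Ideal R} (hM : IsTMaximal K M) {b : R} (hb : b ∉ M) :
    tOp (toK R K (M ⊔ Ideal.span {b})) = 1 := by
  set N := ofK (tOp (toK R K (M ⊔ Ideal.span {b})))
  have hle : M ⊔ Ideal.span {b} ≤ N := le_ofK.mpr (le_tOp _)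
  rw [← ofK_eq_top (tOp_le_one (toK_le_one _))]
  by_contra hN
  have hNM : N = M := hM.2.2 N hN (isTIdeal_ofK_tOp (toK_le_one _)) (le_sup_left.trans hle)
  exact hb (hNM ▸ hle (Ideal.mem_sup_right (Ideal.mem_span_singleton_self b)))

lemma IsTMaximal.isPrime {M : Ideal R} (hM : IsTMaximal K M) : M.IsPrime := by
  refine Ideal.isPrime_iff.mpr ⟨hM.1, fun {a b} hab => or_iff_not_imp_right.mpr fun hb => ?_⟩
  have hprod : Ideal.span {a} * (M ⊔ Ideal.span {b}) ≤ M := by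
    rw [Ideal.mul_sup, Ideal.span_singleton_mul_span_singleton]
    exact sup_le Ideal.mul_le_right ((Ideal.span_singleton_le_iff_mem M).mpr hab)
  have hspan : toK R K (Ideal.span {a}) ≤ toK R K M :=
    calc toK R K (Ideal.span {a})
        = toK R K (Ideal.span {a}) * tOp (toK R K (M ⊔ Ideal.span {b})) := by
          rw [hM.tOp_sup_span_eq_one hb, mul_one]
      _ ≤ tOp (toK R K (Ideal.span {a} * (M ⊔ Ideal.span {b}))) := by
          rw [toK_mul]
          exact mul_tOp_le _ _
      _ ≤ tOp (toK R K M) := tOp_mono (toK_mono hprod)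
      _ = toK R K M := hM.2.1
  exact toK_le_toK.mp hspan (Ideal.mem_span_singleton_self a)

end TMaximal

section Dual

variable {R : Type*} [CommRing R] {K : Type*} [Field K] [Algebra R K] [IsFractionRing R K]

lemma not_isTInvertible_of_isSubringOf_dual {I : Ideal R} (htop : I ≠ ⊤) (htI : IsTIdeal K I)
    (hJ : IsSubringOf (dual (toK R K I))) : ¬ IsTInvertible K I := by
  intro hinv
  have hJle : dual (toK R K I) ≤ 1 :=
    le_one_of_tOp_mul_eq_one (Submodule.mul_le.mpr hJ.2) hinv
  have hJ1 : dual (toK R K I) = 1 := le_antisymm hJle (Submodule.one_le_one_div.mpr (toK_le_one I))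
  have hinv' : tOp (toK R K I * dual (toK R K I)) = 1 := hinv
  rw [hJ1, mul_one, htI] at hinv'
  exact htop (toK_eq_one.mp hinv')

lemma isSubringOf_div_of_isPrime {I P : Ideal R} (hP : P.IsPrime) (hIP : I ≤ P)
    (hJ : IsSubringOf (dual (toK R K I))) : IsSubringOf (toK R K P / toK R K I) := by
  have hPJ : toK R K P / toK R K I ≤ dual (toK R K I) := div_le_one_div (toK_le_one P) _
  refine ⟨Submodule.one_mem_div.mpr (toK_mono hIP), fun x hx y hy => ?_⟩
  by_cases hJP : dual (toK R K I) ≤ toK R K P / toK R K I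
  · exact hJP (hJ.2 x (hPJ hx) y (hPJ hy))
  obtain ⟨u, huJ, hu⟩ := Set.not_subset.mp hJP
  obtain ⟨a, haI, hua⟩ : ∃ a ∈ toK R K I, u * a ∉ toK R K P := by
    simpa [Submodule.mem_div_iff_forall_mul_mem] using hu
  -- `u * a ∈ R ∖ P` and `(x y z) (u a) = (u x a) (y z) ∈ R P`, so `x y z ∈ P` as `P` is prime.
  intro z hz
  have hxyz : x * y * z ∈ (1 : Submodule R K) := hJ.2 x (hPJ hx) y (hPJ hy) z hz
  have huxa : u * x * a ∈ (1 : Submodule R K) := hJ.2 u huJ x (hPJ hx) a haI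
  refine mem_toK_of_mul_mem hP hxyz (huJ a haI) hua ?_
  have hprod : x * y * z * (u * a) = (u * x * a) * (y * z) := by ring
  rw [hprod]
  obtain ⟨r, hr⟩ := Submodule.mem_one.mp huxa
  rw [← hr, ← Algebra.smul_def]
  exact Submodule.smul_mem _ r (hy z hz)

lemma exists_isTMaximal_dual_eq_div {I : Ideal R} (hninv : ¬ IsTInvertible K I) :
    ∃ M : Ideal R, IsTMaximal K M ∧ I ≤ M ∧ dual (toK R K I) = toK R K M / toK R K I := by
  have hIJ : toK R K I * dual (toK R K I) ≤ 1 := Submodule.mul_one_div_le_one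
  obtain ⟨M, hM, hTM⟩ := exists_isTMaximal_le (K := K)
    (mt (ofK_eq_top (tOp_le_one hIJ)).mp hninv) (isTIdeal_ofK_tOp hIJ)
  have hIJM : toK R K I * dual (toK R K I) ≤ toK R K M :=
    (le_tOp _).trans ((toK_ofK (tOp_le_one hIJ)).ge.trans (toK_mono hTM))
  have hIM : toK R K I ≤ toK R K M :=
    calc toK R K I = toK R K I * 1 := (mul_one _).symm
      _ ≤ toK R K I * dual (toK R K I) :=
          mul_le_mul_right (Submodule.one_le_one_div.mpr (toK_le_one I)) _
      _ ≤ toK R K M := hIJM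
  refine ⟨M, hM, toK_le_toK.mp hIM, le_antisymm ?_ (div_le_one_div (toK_le_one M) _)⟩
  rw [Submodule.le_div_iff_mul_le, mul_comm]
  exact hIJM

end Dual

section Statements

variable {R : Type*} [CommRing R] [IsDomain R]
variable {K : Type*} [Field K] [Algebra R K] [IsFractionRing R K]

theorem statement_1_general (I : Ideal R) (htop : I ≠ ⊤) (htI : IsTIdeal K I) :
    IsSubringOf (dual (toK R K I)) ↔
      ¬ IsTInvertible K I ∧
        ∀ M : Ideal R, IsTMaximal K M → I ≤ M → IsSubringOf (toK R K M / toK R K I) := by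
  constructor
  · intro hJ
    exact ⟨not_isTInvertible_of_isSubringOf_dual htop htI hJ,
      fun M hM hIM => isSubringOf_div_of_isPrime hM.isPrime hIM hJ⟩
  · rintro ⟨hninv, hdiv⟩
    obtain ⟨M, hM, hIM, hJ⟩ := exists_isTMaximal_dual_eq_div hninv
    rw [hJ]
    exact hdiv M hM hIM

/-- Let `I` be a proper `t`-ideal of an integral domain `R`. Then `I⁻¹`
is a subring of `K` iff `I` is not `t`-invertible and `(M : I)` is a subring of `K` for
each `t`-maximal ideal `M` of `R` containing `I`. -/
theorem statement_1 (I : Ideal R) (hbot : I ≠ ⊥) (htop : I ≠ ⊤) (htI : IsTIdeal K I) :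
    IsSubringOf (dual (toK R K I)) ↔
      ¬ IsTInvertible K I ∧
        ∀ M : Ideal R, IsTMaximal K M → I ≤ M → IsSubringOf (toK R K M / toK R K I) :=
  statement_1_general I htop htI

end Statements

end

end PVMDPaper
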